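/- Let n ≥ 2t with t > 1, and let q be a prime power. Then the minimum size τ_q(n+t-1, t) of a maximal partial t-spread of V(n+t-1, q) satisfies τ_q(n+t-1, t) ≥ σ_q(n,t), where σ_q(n,t) is the minimum size of a subspace partition of V(n,q) whose largest member has dimension t, given that every minimum size maximal partial t-spread S of V(n+t-1,q) has the property that ∪_{W∈S} W contains an n-dimensional subspace. -/

import Mathlib

open Module

/-- A subspace partition: a collection of nonzero subspaces such that every
nonzero vector lies in exactly one member. -/
def IsSubspacePartition {F V : Type*} [Field F] [AddCommGroup V] [Module F V]
    (P : Finset (Submodule F V)) : Prop :=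
  (∀ W ∈ P, W ≠ ⊥) ∧ ∀ v : V, v ≠ 0 → ∃! W, W ∈ P ∧ v ∈ W

/-- A partial t-spread: a collection of t-dimensional subspaces that pairwise
intersect trivially. -/
def IsPartialSpread {F V : Type*} [Field F] [AddCommGroup V] [Module F V]
    (t : ℕ) (S : Finset (Submodule F V)) : Prop :=
  (∀ W ∈ S, finrank F ↥W = t) ∧ ∀ W ∈ S, ∀ W' ∈ S, W ≠ W' → W ⊓ W' = ⊥

/-- A maximal partial t-spread: one that cannot be extended by any further
t-dimensional subspace. -/
def IsMaximalPartialSpread {F V : Type*} [Field F] [AddCommGroup V] [Module F V]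
    (t : ℕ) (S : Finset (Submodule F V)) : Prop :=
  IsPartialSpread t S ∧
    ∀ U : Submodule F V, finrank F ↥U = t → (∀ W ∈ S, U ⊓ W = ⊥) → U ∈ S

/-! Intersecting a minimum maximal partial `t`-spread `S` of `V(n+t-1,q)` with the `n`-space
`B` covered by it gives a subspace partition of `B` with at most `τ` members, each of dimension
between `1` and `t` (every member meets `B` because `t + n > n + t - 1`). If some member has
dimension `t`, this partition already shows `σ ≤ τ`. Otherwise all members have dimension at
most `t - 1`, and counting vectors gives `τ (q^(t-1) - 1) ≥ q^n - 1`. On the other side, embed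
`𝔽_q^t` into `K = 𝔽_(q^(n-t))` (possible as `2t ≤ n`): then `V(n,q) ≅ K × 𝔽_q^t` is partitioned
by the `q^(n-t)` graphs of `u ↦ k u`, `k ∈ K`, together with the points of `K × 0`. This
partition has largest dimension `t` and fewer than `2 q^(n-t)` members, hence at most `τ`. -/

open Finset

section SubspacePartition

variable {F V W : Type*} [Field F] [AddCommGroup V] [Module F V] [AddCommGroup W] [Module F W]

def MaxFinrankEq (t : ℕ) (P : Finset (Submodule F V)) : Prop :=
  (∀ X ∈ P, finrank F X ≤ t) ∧ ∃ X ∈ P, finrank F X = t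

theorem isSubspacePartition_of_forall_eq {P : Finset (Submodule F V)} (piece : V → Submodule F V)
    (hbot : ∀ X ∈ P, X ≠ ⊥) (hpiece : ∀ v, v ≠ 0 → piece v ∈ P ∧ v ∈ piece v)
    (heq : ∀ X ∈ P, ∀ v, v ≠ 0 → v ∈ X → X = piece v) : IsSubspacePartition P :=
  ⟨hbot, fun v hv => ⟨piece v, hpiece v hv, fun X hX => heq X hX.1 v hv hX.2⟩⟩

theorem IsSubspacePartition.natCard_sub_one_le_sum [Finite V] {P : Finset (Submodule F V)}
    (hP : IsSubspacePartition P) : Nat.card V - 1 ≤ ∑ X ∈ P, (Nat.card X - 1) := by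
  classical
  have := Fintype.ofFinite V
  have hnonzero (X : Submodule F V) : ((univ.filter (· ∈ X)).erase 0).card = Nat.card X - 1 := by
    rw [card_erase_of_mem (by simp), ← Fintype.card_subtype, Nat.card_eq_fintype_card]
  calc Nat.card V - 1 = (univ.erase (0 : V)).card := by simp [Nat.card_eq_fintype_card]
    _ ≤ (P.biUnion fun X => (univ.filter (· ∈ X)).erase 0).card := by
        refine card_le_card fun v hv => ?_
        obtain ⟨X, ⟨hX, hvX⟩, -⟩ := hP.2 v (ne_of_mem_erase hv)
        exact mem_biUnion.2 ⟨X, hX, by simp [ne_of_mem_erase hv, hvX]⟩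
    _ ≤ ∑ X ∈ P, (Nat.card X - 1) :=
        card_biUnion_le.trans (sum_le_sum fun X _ => (hnonzero X).le)

theorem IsSubspacePartition.pow_finrank_sub_one_le [Finite F] [FiniteDimensional F V]
    {P : Finset (Submodule F V)} (hP : IsSubspacePartition P) {d : ℕ}
    (hd : ∀ X ∈ P, finrank F X ≤ d) :
    Nat.card F ^ finrank F V - 1 ≤ P.card * (Nat.card F ^ d - 1) := by
  have : Finite V := Module.finite_of_finite F
  have hq : 0 < Nat.card F := Nat.card_pos
  calc Nat.card F ^ finrank F V - 1 ≤ ∑ X ∈ P, (Nat.card X - 1) := by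
        rw [← Module.natCard_eq_pow_finrank]; exact hP.natCard_sub_one_le_sum
    _ ≤ ∑ _X ∈ P, (Nat.card F ^ d - 1) := sum_le_sum fun X hX => by
        rw [Module.natCard_eq_pow_finrank (K := F)]
        exact Nat.sub_le_sub_right (Nat.pow_le_pow_right hq (hd X hX)) 1
    _ = P.card * (Nat.card F ^ d - 1) := by rw [sum_const, smul_eq_mul]

theorem IsSubspacePartition.exists_linearEquiv_map {P : Finset (Submodule F V)}
    (hP : IsSubspacePartition P) {t : ℕ} (hPt : MaxFinrankEq t P) (e : V ≃ₗ[F] W) :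
    ∃ Q : Finset (Submodule F W), IsSubspacePartition Q ∧ MaxFinrankEq t Q ∧
      Q.card = P.card := by
  classical
  let f : V →ₗ[F] W := e
  refine ⟨P.image (Submodule.map f), ⟨?_, fun w hw => ?_⟩, ⟨?_, ?_⟩,
    card_image_of_injective _ (Submodule.map_injective_of_injective (f := f) e.injective)⟩
  · simp only [mem_image, forall_exists_index, and_imp]
    rintro _ X hX rfl
    simpa [f] using hP.1 X hX
  · obtain ⟨X, ⟨hX, hwX⟩, huniq⟩ := hP.2 (e.symm w) (by simpa using hw)
    refine ⟨X.map f, ⟨mem_image_of_mem _ hX, by simpa [f, Submodule.mem_map_equiv] using hwX⟩,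
      ?_⟩
    simp only [mem_image, and_imp, forall_exists_index]
    rintro _ Y hY rfl hwY
    rw [huniq Y ⟨hY, by simpa [f, Submodule.mem_map_equiv] using hwY⟩]
  · simp only [mem_image, forall_exists_index, and_imp]
    rintro _ X hX rfl
    rw [LinearEquiv.finrank_map_eq]; exact hPt.1 X hX
  · obtain ⟨X, hX, hXt⟩ := hPt.2
    exact ⟨X.map f, mem_image_of_mem _ hX, by rw [LinearEquiv.finrank_map_eq, hXt]⟩

end SubspacePartition

theorem IsPartialSpread.exists_isSubspacePartition_of_subset_iUnion {F V : Type*} [Field F]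
    [AddCommGroup V] [Module F V] [FiniteDimensional F V] {t : ℕ} {S : Finset (Submodule F V)}
    (hS : IsPartialSpread t S) (B : Submodule F V)
    (hB : (B : Set V) ⊆ ⋃ X ∈ (S : Set (Submodule F V)), (X : Set V))
    (hdim : finrank F V < t + finrank F B) :
    ∃ P : Finset (Submodule F B), IsSubspacePartition P ∧ (∀ X ∈ P, finrank F X ≤ t) ∧
      P.card ≤ S.card := by
  classical
  refine ⟨S.image (Submodule.comap B.subtype), ⟨?_, fun v hv => ?_⟩, ?_, card_image_le⟩
  · simp only [mem_image, forall_exists_index, and_imp]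
    rintro _ X hX rfl
    have hmeet : ¬Disjoint X B := fun h => by
      have := Submodule.finrank_add_finrank_le_of_disjoint h
      rw [hS.1 X hX] at this
      omega
    obtain ⟨v, hvX, hvB, hv⟩ : ∃ v ∈ X, v ∈ B ∧ v ≠ 0 := by
      simpa [Submodule.disjoint_def] using hmeet
    exact (Submodule.ne_bot_iff _).2 ⟨⟨v, hvB⟩, hvX, by simpa using hv⟩
  · obtain ⟨X, hX, hvX⟩ : ∃ X ∈ S, (v : V) ∈ X := by simpa using hB v.2
    refine ⟨X.comap B.subtype, ⟨mem_image_of_mem _ hX, hvX⟩, ?_⟩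
    simp only [mem_image, and_imp, forall_exists_index]
    rintro _ Y hY rfl hvY
    by_contra hXY
    have := hS.2 Y hY X hX (fun h => hXY (h ▸ rfl))
    have hv' : (v : V) ∈ Y ⊓ X := ⟨hvY, hvX⟩
    rw [this, Submodule.mem_bot, ZeroMemClass.coe_eq_zero] at hv'
    exact hv hv'
  · simp only [mem_image, forall_exists_index, and_imp]
    rintro _ X hX rfl
    rw [← Submodule.finrank_map_subtype_eq, Submodule.map_comap_subtype, ← hS.1 X hX]
    exact Submodule.finrank_mono inf_le_right

section MulGraph

variable {F K E : Type*} [Field F] [Field K] [Algebra F K] [AddCommGroup E] [Module F E]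
  (ι : E →ₗ[F] K)

def mulGraph (k : K) : Submodule F (K × E) :=
  LinearMap.range ((LinearMap.mulLeft F k ∘ₗ ι).prod LinearMap.id)

variable {ι} in
theorem mem_mulGraph {k : K} {v : K × E} : v ∈ mulGraph ι k ↔ v.1 = k * ι v.2 :=
  ⟨by rintro ⟨u, rfl⟩; rfl, fun h => ⟨v.2, Prod.ext h.symm rfl⟩⟩

theorem finrank_mulGraph (k : K) : finrank F (mulGraph ι k) = finrank F E :=
  LinearMap.finrank_range_of_inj fun _ _ h => congrArg Prod.snd h

open Classical in
noncomputable def mulGraphPartition [Fintype K] : Finset (Submodule F (K × E)) :=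
  univ.image (mulGraph ι) ∪ (univ.filter (· ≠ 0)).image fun x => F ∙ ((x, 0) : K × E)

variable [Fintype K]

variable {ι} in
theorem mem_mulGraphPartition {X : Submodule F (K × E)} :
    X ∈ mulGraphPartition ι ↔
      (∃ k, mulGraph ι k = X) ∨ ∃ x ≠ 0, F ∙ ((x, 0) : K × E) = X := by
  simp [mulGraphPartition]

theorem isSubspacePartition_mulGraphPartition [Nontrivial E] (hι : Function.Injective ι) :
    IsSubspacePartition (mulGraphPartition ι) := by
  classical
  have hι0 {u : E} (hu : u ≠ 0) : ι u ≠ 0 := (map_ne_zero_iff ι hι).2 hu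
  refine isSubspacePartition_of_forall_eq
    (fun v => if v.2 = 0 then F ∙ v else mulGraph ι (v.1 / ι v.2)) ?_ (fun v hv => ?_) ?_
  · rintro X hX rfl
    obtain ⟨u, hu⟩ := exists_ne (0 : E)
    rcases mem_mulGraphPartition.1 hX with ⟨k, hk⟩ | ⟨x, hx, hx'⟩
    · have : ((k * ι u, u) : K × E) ∈ mulGraph ι k := mem_mulGraph.2 rfl
      simp [hk, hu] at this
    · simp [hx] at hx'
  · by_cases hv2 : v.2 = 0
    · have hv1 : v.1 ≠ 0 := fun h => hv (Prod.ext h hv2)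
      simp only [hv2, if_true, Submodule.mem_span_singleton_self, and_true]
      exact mem_mulGraphPartition.2 (Or.inr ⟨v.1, hv1, by rw [← hv2]⟩)
    · simp only [hv2, if_false, mem_mulGraph]
      exact ⟨mem_mulGraphPartition.2 (Or.inl ⟨_, rfl⟩),
        (div_mul_cancel₀ _ (hι0 hv2)).symm⟩
  · intro X hX v hv hvX
    rcases mem_mulGraphPartition.1 hX with ⟨k, rfl⟩ | ⟨x, hx, rfl⟩
    · rw [mem_mulGraph] at hvX
      have hv2 : v.2 ≠ 0 := fun h => hv (Prod.ext (by simp [hvX, h]) h)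
      rw [if_neg hv2, hvX, mul_div_cancel_right₀ _ (hι0 hv2)]
    · obtain ⟨c, rfl⟩ := Submodule.mem_span_singleton.1 hvX
      have hc : c ≠ 0 := by rintro rfl; simp at hv
      rw [if_pos (by simp), Submodule.span_singleton_smul_eq (IsUnit.mk0 c hc)]

theorem maxFinrankEq_mulGraphPartition [FiniteDimensional F E] [Nontrivial E] :
    MaxFinrankEq (finrank F E) (mulGraphPartition ι) := by
  refine ⟨fun X hX => ?_, mulGraph ι 0, mem_mulGraphPartition.2 (Or.inl ⟨0, rfl⟩),
    finrank_mulGraph ι 0⟩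
  rcases mem_mulGraphPartition.1 hX with ⟨k, rfl⟩ | ⟨x, hx, rfl⟩
  · exact (finrank_mulGraph ι k).le
  · rw [finrank_span_singleton (by simpa using hx)]
    exact Module.finrank_pos

theorem card_mulGraphPartition_lt : (mulGraphPartition ι).card < 2 * Nat.card K := by
  classical
  have hK : 0 < Fintype.card K := Fintype.card_pos
  calc (mulGraphPartition ι).card
      ≤ (univ : Finset K).card + (univ.filter fun x : K => x ≠ 0).card := by
        refine (card_union_le _ _).trans (add_le_add card_image_le card_image_le)
    _ = Fintype.card K + (Fintype.card K - 1) := by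
        rw [card_univ, filter_ne' univ (0 : K), card_erase_of_mem (mem_univ _), card_univ]
    _ < 2 * Nat.card K := by rw [Nat.card_eq_fintype_card]; omega

end MulGraph

theorem two_mul_pow_sub_one_mul_lt {q : ℕ} (hq : 2 ≤ q) (m : ℕ) {t : ℕ} (ht : 0 < t) :
    (2 * q ^ m - 1) * (q ^ (t - 1) - 1) < q ^ (m + t) - 1 := by
  have hqn : q ^ (m + t) = q ^ m * q ^ (t - 1) * q := by
    rw [← pow_add, ← pow_succ]; congr 1; omega
  have ha : 1 ≤ q ^ m := Nat.one_le_pow _ _ (by omega)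
  have hb : 1 ≤ q ^ (t - 1) := Nat.one_le_pow _ _ (by omega)
  rw [hqn]
  generalize q ^ m = a, q ^ (t - 1) = b at ha hb ⊢
  have hab : a * b * 2 ≤ a * b * q := Nat.mul_le_mul_left _ hq
  have : 1 ≤ a * b := Nat.one_le_iff_ne_zero.2 (by positivity)
  zify [ha, hb, (by omega : 1 ≤ 2 * a), (by omega : 1 ≤ a * b * q)] at hab ⊢
  nlinarith

section FiniteField

variable {F V : Type*} [Field F] [Finite F] [AddCommGroup V] [Module F V] [FiniteDimensional F V]

theorem exists_isSubspacePartition_card_lt {t : ℕ} (ht : 0 < t) (htV : 2 * t ≤ finrank F V) :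
    ∃ P : Finset (Submodule F V), IsSubspacePartition P ∧ MaxFinrankEq t P ∧
      P.card < 2 * Nat.card F ^ (finrank F V - t) := by
  obtain ⟨p, _⟩ := CharP.exists F
  have : Fact p.Prime := ⟨CharP.char_is_prime F p⟩
  have : NeZero (finrank F V - t) := ⟨by omega⟩
  have : NeZero t := ⟨ht.ne'⟩
  let K := FiniteField.Extension F p (finrank F V - t)
  have : Fintype K := Fintype.ofFinite K
  have hK : finrank F K = finrank F V - t := FiniteField.finrank_extension F p _
  obtain ⟨ι, hι⟩ : ∃ ι : (Fin t → F) →ₗ[F] K, Function.Injective ι :=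
    finrank_le_iff_exists_linearMap.1 (by rw [hK, Module.finrank_fin_fun]; omega)
  have hmax := maxFinrankEq_mulGraphPartition (F := F) ι
  rw [Module.finrank_fin_fun] at hmax
  obtain ⟨P, hP, hPt, hcard⟩ :=
    (isSubspacePartition_mulGraphPartition ι hι).exists_linearEquiv_map hmax
      (LinearEquiv.ofFinrankEq (K × (Fin t → F)) V
        (by rw [Module.finrank_prod, hK, Module.finrank_fin_fun]; omega))
  refine ⟨P, hP, hPt, hcard ▸ ?_⟩
  rw [← FiniteField.natCard_extension F p]
  exact card_mulGraphPartition_lt ι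

theorem IsSubspacePartition.exists_maxFinrankEq_card_le {P : Finset (Submodule F V)}
    (hP : IsSubspacePartition P) {t : ℕ} (hPt : ∀ X ∈ P, finrank F X ≤ t) (ht : 0 < t)
    (htV : 2 * t ≤ finrank F V) :
    ∃ Q : Finset (Submodule F V), IsSubspacePartition Q ∧ MaxFinrankEq t Q ∧
      Q.card ≤ P.card := by
  by_cases hmax : ∃ X ∈ P, finrank F X = t
  · exact ⟨P, hP, ⟨hPt, hmax⟩, le_rfl⟩
  push Not at hmax
  have hcount := hP.pow_finrank_sub_one_le (d := t - 1) fun X hX => by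
    have := hPt X hX; have := hmax X hX; omega
  obtain ⟨Q, hQ, hQt, hQcard⟩ := exists_isSubspacePartition_card_lt (V := V) ht htV
  refine ⟨Q, hQ, hQt, le_of_lt (Nat.lt_of_mul_lt_mul_right (a := Nat.card F ^ (t - 1) - 1) ?_)⟩
  calc Q.card * (Nat.card F ^ (t - 1) - 1)
      ≤ (2 * Nat.card F ^ (finrank F V - t) - 1) * (Nat.card F ^ (t - 1) - 1) :=
        Nat.mul_le_mul_right _ (by omega)
    _ < Nat.card F ^ (finrank F V - t + t) - 1 :=
        two_mul_pow_sub_one_mul_lt Finite.one_lt_card _ ht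
    _ ≤ P.card * (Nat.card F ^ (t - 1) - 1) := by
        rw [Nat.sub_add_cancel (by omega)]; exact hcount

end FiniteField

theorem tau_ge_sigma_general {F : Type*} [Field F] [Fintype F]
    (n t : ℕ) (ht : 1 < t) (hn : 2 * t ≤ n)
    (τ σ : ℕ)
    (hτ : IsLeast {m : ℕ | ∃ S : Finset (Submodule F (Fin (n + t - 1) → F)),
      IsMaximalPartialSpread t S ∧ S.card = m} τ)
    (hσ : IsLeast {m : ℕ | ∃ P : Finset (Submodule F (Fin n → F)),
      IsSubspacePartition P ∧ (∀ W ∈ P, finrank F ↥W ≤ t) ∧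
      (∃ W ∈ P, finrank F ↥W = t) ∧ P.card = m} σ)
    (hGov : ∀ S : Finset (Submodule F (Fin (n + t - 1) → F)),
      IsMaximalPartialSpread t S → S.card = τ →
        ∃ B : Submodule F (Fin (n + t - 1) → F), finrank F ↥B = n ∧
          (B : Set (Fin (n + t - 1) → F)) ⊆
            ⋃ W ∈ (S : Set (Submodule F (Fin (n + t - 1) → F))),
              (W : Set (Fin (n + t - 1) → F))) :
    σ ≤ τ := by
  obtain ⟨⟨S, hS, rfl⟩, -⟩ := hτ
  obtain ⟨B, hBn, hBS⟩ := hGov S hS rfl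
  obtain ⟨P, hP, hPt, hPS⟩ :=
    hS.1.exists_isSubspacePartition_of_subset_iUnion B hBS
      (by rw [Module.finrank_fin_fun, hBn]; omega)
  obtain ⟨Q, hQ, hQt, hQP⟩ := hP.exists_maxFinrankEq_card_le hPt (by omega) (by omega)
  obtain ⟨R, hR, hRt, hRQ⟩ :=
    hQ.exists_linearEquiv_map hQt (LinearEquiv.ofFinrankEq B (Fin n → F) (by simp [hBn]))
  calc σ ≤ R.card := hσ.2 ⟨R, hR, hRt.1, hRt.2, rfl⟩
    _ ≤ S.card := by omega

theorem tau_ge_sigma {F : Type*} [Field F] [Fintype F]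
    (q n t : ℕ) (hq : Fintype.card F = q) (ht : 1 < t) (hn : 2 * t ≤ n)
    (τ σ : ℕ)
    (hτ : IsLeast {m : ℕ | ∃ S : Finset (Submodule F (Fin (n + t - 1) → F)),
      IsMaximalPartialSpread t S ∧ S.card = m} τ)
    (hσ : IsLeast {m : ℕ | ∃ P : Finset (Submodule F (Fin n → F)),
      IsSubspacePartition P ∧ (∀ W ∈ P, finrank F ↥W ≤ t) ∧
      (∃ W ∈ P, finrank F ↥W = t) ∧ P.card = m} σ)
    (hGov : ∀ S : Finset (Submodule F (Fin (n + t - 1) → F)),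
      IsMaximalPartialSpread t S → S.card = τ →
        ∃ B : Submodule F (Fin (n + t - 1) → F), finrank F ↥B = n ∧
          (B : Set (Fin (n + t - 1) → F)) ⊆
            ⋃ W ∈ (S : Set (Submodule F (Fin (n + t - 1) → F))),
              (W : Set (Fin (n + t - 1) → F))) :
    σ ≤ τ :=
  tau_ge_sigma_general n t ht hn τ σ hτ hσ hGov
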